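/- arXiv:2006.02540 — 2 statements merged into one kernel-verified Lean document; each statement's English description precedes it below -/
import Mathlib

section
/- For all θ ∈ [0,1], p, q ∈ ℝ³ with p + q ≠ 0, and unit vectors w ∈ ℝ³, the quantity A := (1 − θ/2) + (θ/2)·g·(γ−1)·((p+q)·w)/|p+q|² satisfies 1 − θ < A < 1 when θ > 0 (and A = 1 if θ = 0), where g = √(2(p⁰q⁰−p·q−1)), s = g²+4, γ = (p⁰+q⁰)/√s, p⁰ = √(1+|p|²), q⁰ = √(1+|q|²). -/
/-!
With `e = p⁰ + q⁰` and `s = g² + 4`, the energy–momentum identity `e² = s + |p + q|²` gives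
`γ - 1 = |p + q|² / (√s (e + √s))`, so `A = 1 - θ/2 + (θ/2) X` with
`X = g ((p + q)·w) / (√s (e + √s))`. Since `g < √s` and `|(p + q)·w| ≤ |p| + |q| < e`, we get
`|X| < 1`, and `A` is a strict convex combination of `1 - θ` and `1`.
-/

noncomputable def energy (p : EuclideanSpace ℝ (Fin 3)) : ℝ := Real.sqrt (1 + ‖p‖^2)

noncomputable def relMom (p q : EuclideanSpace ℝ (Fin 3)) : ℝ :=
  Real.sqrt (2 * (energy p * energy q - (inner ℝ p q : ℝ) - 1))

open RealInnerProductSpace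

theorem div_sqrt_sub_one_eq_of_sq_eq {e s n : ℝ} (hs : 0 < s) (he : 0 ≤ e)
    (h : e ^ 2 = s + n ^ 2) : e / √s - 1 = n ^ 2 / (√s * (e + √s)) := by
  have hr : 0 < √s := Real.sqrt_pos.mpr hs
  rw [div_sub_one hr.ne', div_eq_div_iff hr.ne' (by positivity)]
  linear_combination √s * h - √s * Real.sq_sqrt hs.le

theorem one_sub_lt_and_lt_one_of_abs_lt_one {θ X : ℝ} (hθ : 0 < θ) (hX : |X| < 1) :
    1 - θ < 1 - θ / 2 + θ / 2 * X ∧ 1 - θ / 2 + θ / 2 * X < 1 := by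
  obtain ⟨hX₁, hX₂⟩ := abs_lt.mp hX
  constructor <;> nlinarith

section Kinematics

variable (p q : EuclideanSpace ℝ (Fin 3))

theorem sq_energy : energy p ^ 2 = 1 + ‖p‖ ^ 2 :=
  Real.sq_sqrt (by positivity)

theorem energy_nonneg : 0 ≤ energy p :=
  Real.sqrt_nonneg _

theorem norm_lt_energy : ‖p‖ < energy p :=
  Real.lt_sqrt (norm_nonneg p) |>.mpr (by linarith)

theorem one_add_norm_mul_norm_le_energy_mul_energy :
    1 + ‖p‖ * ‖q‖ ≤ energy p * energy q := by
  rw [energy, energy, ← Real.sqrt_mul (by positivity)]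
  apply Real.le_sqrt_of_sq_le
  nlinarith [sq_nonneg (‖p‖ - ‖q‖)]

theorem one_le_energy_mul_energy_sub_inner : 1 ≤ energy p * energy q - ⟪p, q⟫ := by
  linarith [real_inner_le_norm p q, one_add_norm_mul_norm_le_energy_mul_energy p q]

theorem relMom_nonneg : 0 ≤ relMom p q :=
  Real.sqrt_nonneg _

theorem sq_relMom : relMom p q ^ 2 = 2 * (energy p * energy q - ⟪p, q⟫ - 1) :=
  Real.sq_sqrt (by linarith [one_le_energy_mul_energy_sub_inner p q])

theorem sq_energy_add_energy :
    (energy p + energy q) ^ 2 = (relMom p q ^ 2 + 4) + ‖p + q‖ ^ 2 := by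
  rw [add_sq, sq_energy, sq_energy, sq_relMom, norm_add_sq_real]
  ring

theorem relMom_mul_gamma_sub_one_mul_inner (w : EuclideanSpace ℝ (Fin 3)) :
    relMom p q * ((energy p + energy q) / √(relMom p q ^ 2 + 4) - 1) * ⟪p + q, w⟫ /
        ‖p + q‖ ^ 2
      = relMom p q * ⟪p + q, w⟫ /
          (√(relMom p q ^ 2 + 4) * (energy p + energy q + √(relMom p q ^ 2 + 4))) := by
  by_cases hpq : p + q = 0
  · simp [hpq]
  rw [div_sqrt_sub_one_eq_of_sq_eq (by positivity)
    (add_nonneg (energy_nonneg p) (energy_nonneg q)) (sq_energy_add_energy p q)]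
  have : ‖p + q‖ ≠ 0 := norm_ne_zero_iff.mpr hpq
  field_simp

theorem abs_relMom_mul_inner_div_lt_one {w : EuclideanSpace ℝ (Fin 3)} (hw : ‖w‖ ≤ 1) :
    |relMom p q * ⟪p + q, w⟫ /
        (√(relMom p q ^ 2 + 4) * (energy p + energy q + √(relMom p q ^ 2 + 4)))| < 1 := by
  set g := relMom p q
  set r := √(g ^ 2 + 4)
  set e := energy p + energy q
  have hg : 0 ≤ g := relMom_nonneg p q
  have hr : 0 < r := Real.sqrt_pos.mpr (by positivity)
  have hgr : g < r := Real.lt_sqrt hg |>.mpr (by linarith)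
  have hinner : |⟪p + q, w⟫| ≤ ‖p + q‖ :=
    (abs_real_inner_le_norm _ _).trans (mul_le_of_le_one_right (norm_nonneg _) hw)
  have hnorm : ‖p + q‖ < e + r := by
    linarith [norm_add_le p q, norm_lt_energy p, norm_lt_energy q]
  have he : 0 < e + r := by linarith [norm_nonneg (p + q)]
  rw [abs_div, abs_mul, abs_of_nonneg hg, abs_of_pos (mul_pos hr he),
    div_lt_one (mul_pos hr he)]
  calc g * |⟪p + q, w⟫| ≤ g * ‖p + q‖ := mul_le_mul_of_nonneg_left hinner hg
    _ < r * (e + r) := mul_lt_mul'' hgr hnorm hg (norm_nonneg _)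

end Kinematics

theorem A_bounds_general (θ : ℝ)
    (p q w : EuclideanSpace ℝ (Fin 3)) (hw : ‖w‖ = 1)
    (s γ A : ℝ) (hs : s = (relMom p q)^2 + 4)
    (hγ : γ = (energy p + energy q) / Real.sqrt s)
    (hA : A = (1 - θ/2) + (θ/2) * relMom p q * (γ - 1) * (inner ℝ (p + q) w : ℝ) / ‖p + q‖^2) :
    (0 < θ → 1 - θ < A ∧ A < 1) ∧ (θ = 0 → A = 1) := by
  have hX := relMom_mul_gamma_sub_one_mul_inner p q w
  set X := relMom p q * ⟪p + q, w⟫ /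
    (√(relMom p q ^ 2 + 4) * (energy p + energy q + √(relMom p q ^ 2 + 4)))
  have hAX : A = 1 - θ / 2 + θ / 2 * X := by
    rw [hA, hγ, hs]
    linear_combination θ / 2 * hX
  refine ⟨fun hθ => hAX ▸ one_sub_lt_and_lt_one_of_abs_lt_one hθ ?_, fun hθ => by
    rw [hAX, hθ]; ring⟩
  exact abs_relMom_mul_inner_div_lt_one p q hw.le

theorem A_bounds (θ : ℝ) (hθ : θ ∈ Set.Icc (0:ℝ) 1)
    (p q w : EuclideanSpace ℝ (Fin 3)) (hpq : p + q ≠ 0) (hw : ‖w‖ = 1)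
    (s γ A : ℝ) (hs : s = (relMom p q)^2 + 4)
    (hγ : γ = (energy p + energy q) / Real.sqrt s)
    (hA : A = (1 - θ/2) + (θ/2) * relMom p q * (γ - 1) * (inner ℝ (p + q) w : ℝ) / ‖p + q‖^2) :
    (0 < θ → 1 - θ < A ∧ A < 1) ∧ (θ = 0 → A = 1) :=
  A_bounds_general θ p q w hw s γ A hs hγ hA
end

section
/- Let p, q ∈ ℝ³ with p+q ≠ 0 and w ∈ ℝ³ a unit vector, and let p' = (p+q)/2 + (g/2)(w + (γ−1)(p+q)((p+q)·w)/|p+q|²) and q' = (p+q)/2 − (g/2)(w + (γ−1)(p+q)((p+q)·w)/|p+q|²). Then p'⁰ + q'⁰ = p⁰ + q⁰, i.e. energy is conserved, where x⁰ := √(1+|x|²) for any x ∈ ℝ³. -/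
open scoped RealInnerProductSpace

section SpatialBoost

variable {V : Type*} [NormedAddCommGroup V] [InnerProductSpace ℝ V]

noncomputable def spatialBoost (γ : ℝ) (P w : V) : V :=
  w + ((γ - 1) * ⟪P, w⟫ / ‖P‖ ^ 2) • P

theorem inner_spatialBoost (γ : ℝ) {P : V} (hP : P ≠ 0) (w : V) :
    ⟪P, spatialBoost γ P w⟫ = γ * ⟪P, w⟫ := by
  have hP2 : ‖P‖ ^ 2 ≠ 0 := by positivity
  rw [spatialBoost, inner_add_right, real_inner_smul_right, real_inner_self_eq_norm_sq]
  field_simp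
  ring

theorem norm_spatialBoost_sq (γ : ℝ) {P : V} (hP : P ≠ 0) (w : V) :
    ‖spatialBoost γ P w‖ ^ 2 = ‖w‖ ^ 2 + (γ ^ 2 - 1) * ⟪P, w⟫ ^ 2 / ‖P‖ ^ 2 := by
  have hP2 : ‖P‖ ^ 2 ≠ 0 := by positivity
  rw [spatialBoost, norm_add_sq_real, real_inner_smul_right, norm_smul, real_inner_comm,
    Real.norm_eq_abs, mul_pow, sq_abs]
  field_simp
  ring

theorem norm_smul_add_smul_sq (a c : ℝ) (P u : V) :
    ‖a • P + c • u‖ ^ 2 = a ^ 2 * ‖P‖ ^ 2 + 2 * (a * c) * ⟪P, u⟫ + c ^ 2 * ‖u‖ ^ 2 := by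
  rw [norm_add_sq_real, real_inner_smul_left, real_inner_smul_right, norm_smul, norm_smul,
    Real.norm_eq_abs, Real.norm_eq_abs, mul_pow, mul_pow, sq_abs, sq_abs]
  ring

theorem one_add_norm_collision_sq {P w : V} (hP : P ≠ 0) (hw : ‖w‖ = 1) {E g m : ℝ}
    (hm : 0 < m) (hg : g ^ 2 + 4 = m ^ 2) (hE : E ^ 2 = m ^ 2 + ‖P‖ ^ 2) :
    1 + ‖(1 / 2 : ℝ) • P + (g / 2) • spatialBoost (E / m) P w‖ ^ 2
      = (E / 2 + g * ⟪P, w⟫ / (2 * m)) ^ 2 := by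
  have hP2 : ‖P‖ ^ 2 ≠ 0 := by positivity
  rw [norm_smul_add_smul_sq, inner_spatialBoost _ hP, norm_spatialBoost_sq _ hP, hw]
  field_simp
  linear_combination (g ^ 2 * ⟪P, w⟫ ^ 2 - ‖P‖ ^ 2 * m ^ 2) * hE + ‖P‖ ^ 2 * m ^ 2 * hg

theorem sqrt_one_add_norm_collision_sq {P w : V} (hP : P ≠ 0) (hw : ‖w‖ = 1) {E g m : ℝ}
    (hm : 0 < m) (hE0 : 0 ≤ E) (hg : g ^ 2 + 4 = m ^ 2) (hE : E ^ 2 = m ^ 2 + ‖P‖ ^ 2) :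
    √(1 + ‖(1 / 2 : ℝ) • P + (g / 2) • spatialBoost (E / m) P w‖ ^ 2)
      = E / 2 + g * ⟪P, w⟫ / (2 * m) := by
  rw [one_add_norm_collision_sq hP hw hm hg hE, Real.sqrt_sq]
  have hgm : |g| ≤ m := abs_le_of_sq_le_sq (by linarith) hm.le
  have hPE : ‖P‖ ≤ E := le_of_sq_le_sq (by nlinarith) hE0
  have hinner : |⟪P, w⟫| ≤ ‖P‖ := by simpa [hw] using abs_real_inner_le_norm P w
  have hbound : |g * ⟪P, w⟫| ≤ m * E := by
    rw [abs_mul]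
    exact mul_le_mul hgm (hinner.trans hPE) (abs_nonneg _) hm.le
  have hnum : 0 ≤ m * E + g * ⟪P, w⟫ := neg_le_iff_add_nonneg'.1 (abs_le.1 hbound).1
  calc (0 : ℝ) ≤ (m * E + g * ⟪P, w⟫) / (2 * m) := by positivity
    _ = E / 2 + g * ⟪P, w⟫ / (2 * m) := by field_simp

end SpatialBoost

theorem energy_sq (p : EuclideanSpace ℝ (Fin 3)) : energy p ^ 2 = 1 + ‖p‖ ^ 2 :=
  Real.sq_sqrt (by positivity)

theorem one_add_inner_le_energy_mul_energy (p q : EuclideanSpace ℝ (Fin 3)) :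
    1 + ⟪p, q⟫ ≤ energy p * energy q := by
  have hprod : (1 + ‖p‖ * ‖q‖) ^ 2 ≤ (energy p * energy q) ^ 2 := by
    rw [mul_pow, energy_sq, energy_sq]
    nlinarith [sq_nonneg (‖p‖ - ‖q‖)]
  calc 1 + ⟪p, q⟫ ≤ 1 + ‖p‖ * ‖q‖ := by gcongr; exact real_inner_le_norm p q
    _ ≤ energy p * energy q :=
      le_of_sq_le_sq hprod (mul_nonneg (Real.sqrt_nonneg _) (Real.sqrt_nonneg _))

theorem energy_add_energy_sq (p q : EuclideanSpace ℝ (Fin 3)) :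
    (energy p + energy q) ^ 2 = (relMom p q ^ 2 + 4) + ‖p + q‖ ^ 2 := by
  have hg : relMom p q ^ 2 = 2 * (energy p * energy q - ⟪p, q⟫ - 1) :=
    Real.sq_sqrt (by linarith [one_add_inner_le_energy_mul_energy p q])
  rw [add_sq, energy_sq, energy_sq, hg, norm_add_sq_real]
  ring

theorem energy_conservation (p q w : EuclideanSpace ℝ (Fin 3))
    (hpq : p + q ≠ 0) (hw : ‖w‖ = 1)
    (γ : ℝ) (hγ : γ = (energy p + energy q) / Real.sqrt ((relMom p q)^2 + 4))
    (p' q' : EuclideanSpace ℝ (Fin 3))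
    (hp' : p' = (1/2 : ℝ) • (p + q) + (relMom p q / 2) •
      (w + ((γ - 1) * (inner ℝ (p + q) w : ℝ) / ‖p + q‖^2) • (p + q)))
    (hq' : q' = (1/2 : ℝ) • (p + q) - (relMom p q / 2) •
      (w + ((γ - 1) * (inner ℝ (p + q) w : ℝ) / ‖p + q‖^2) • (p + q))) :
    energy p' + energy q' = energy p + energy q := by
  set E := energy p + energy q
  set g := relMom p q
  set m := √(g ^ 2 + 4)
  have hm : 0 < m := by positivity
  have hg : g ^ 2 + 4 = m ^ 2 := (Real.sq_sqrt (by positivity)).symm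
  have hg' : (-g) ^ 2 + 4 = m ^ 2 := by rwa [neg_sq]
  have hE : E ^ 2 = m ^ 2 + ‖p + q‖ ^ 2 := by rw [← hg]; exact energy_add_energy_sq p q
  have hE0 : 0 ≤ E := add_nonneg (Real.sqrt_nonneg _) (Real.sqrt_nonneg _)
  have hp'' : p' = (1 / 2 : ℝ) • (p + q) + (g / 2) • spatialBoost (E / m) (p + q) w := by
    rw [hp', ← hγ, spatialBoost]
  have hq'' : q' = (1 / 2 : ℝ) • (p + q) + (-g / 2) • spatialBoost (E / m) (p + q) w := by
    rw [hq', ← hγ, spatialBoost, neg_div, neg_smul, sub_eq_add_neg]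
  rw [energy, energy, hp'', hq'', sqrt_one_add_norm_collision_sq hpq hw hm hE0 hg hE,
    sqrt_one_add_norm_collision_sq hpq hw hm hE0 hg' hE]
  ring
end
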